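/- arXiv:2507.20072 — 3 statements merged into one kernel-verified Lean document; each statement's English description precedes it below -/
import Mathlib

section
/- Let X : [0,C] → ℝ be l-times continuously differentiable with 1 ≤ l < k. Then ∫₀^C G^k(t,s) X^{(l)}(s) ds − ∫₀^C G^{k−l}(t,s) X(s) ds is a polynomial in t of degree at most k−1; explicitly it equals −Σ_{m=1}^{l} X^{(l−m)}(0) · t^{k−m}/(k−m)!. -/
/-- Canonical Green's function of the k-th order derivative operator. -/
noncomputable def greenK (k : ℕ) (t s : ℝ) : ℝ :=
  if s ≤ t then (t - s) ^ (k - 1) / (Nat.factorial (k - 1)) else 0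

open MeasureTheory intervalIntegral Set

/-- Reduction of the Green's function integral to an integral up to `t`. -/
lemma green_reduce (C t : ℝ) (ht : t ∈ Set.Icc 0 C) (m : ℕ) (f : ℝ → ℝ)
    (hf : ContinuousOn f (Set.Icc 0 C)) :
    ∫ s in (0 : ℝ)..C, greenK (m + 1) t s * f s
      = ∫ s in (0 : ℝ)..t, (t - s) ^ m / (Nat.factorial m) * f s := by
  obtain ⟨ht0, htC⟩ := ht
  have hcont : ContinuousOn (fun s => (t - s) ^ m / (Nat.factorial m) * f s) (Set.Icc 0 C) := by
    exact (((continuousOn_const.sub continuousOn_id).pow m).div_const _).mul hf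
  have hint1 : IntervalIntegrable (fun s => greenK (m + 1) t s * f s) volume 0 t := by
    rw [intervalIntegrable_iff_integrableOn_Ioc_of_le ht0]
    apply MeasureTheory.IntegrableOn.congr_fun
      (f := fun s => (t - s) ^ m / (Nat.factorial m) * f s)
    · exact ((hcont.mono (Set.Icc_subset_Icc le_rfl htC)).integrableOn_Icc).mono_set
        Set.Ioc_subset_Icc_self
    · intro s hs
      simp [greenK, hs.2]
    · exact measurableSet_Ioc
  have hint2 : IntervalIntegrable (fun s => greenK (m + 1) t s * f s) volume t C := by
    rw [intervalIntegrable_iff_integrableOn_Ioc_of_le htC]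
    apply MeasureTheory.IntegrableOn.congr_fun (f := fun _ => (0 : ℝ))
    · exact integrableOn_zero
    · intro s hs
      simp [greenK, not_le.mpr hs.1]
    · exact measurableSet_Ioc
  have hsplit := intervalIntegral.integral_add_adjacent_intervals hint1 hint2
  have h2 : ∫ s in t..C, greenK (m + 1) t s * f s = 0 := by
    rw [intervalIntegral.integral_of_le htC]
    rw [MeasureTheory.setIntegral_congr_fun measurableSet_Ioc
      (g := fun _ => (0 : ℝ)) (fun s hs => by simp [greenK, not_le.mpr hs.1])]
    simp
  have h1 : ∫ s in (0 : ℝ)..t, greenK (m + 1) t s * f s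
      = ∫ s in (0 : ℝ)..t, (t - s) ^ m / (Nat.factorial m) * f s := by
    apply intervalIntegral.integral_congr
    intro s hs
    rw [Set.uIcc_of_le ht0] at hs
    simp [greenK, hs.2]
  rw [← hsplit, h2, add_zero, h1]

/-- One step of integration by parts. -/
lemma ibp_step (C t : ℝ) (ht : t ∈ Set.Icc 0 C) (m : ℕ) (g g' : ℝ → ℝ)
    (hgc : ContinuousOn g (Set.Icc 0 C))
    (hg' : ∀ s ∈ Set.Icc 0 C, HasDerivWithinAt g (g' s) (Set.Icc 0 C) s)
    (hg'c : ContinuousOn g' (Set.Icc 0 C)) :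
    ∫ s in (0 : ℝ)..t, (t - s) ^ (m + 1) / (Nat.factorial (m + 1)) * g' s
      = -(t ^ (m + 1) / (Nat.factorial (m + 1)) * g 0)
        + ∫ s in (0 : ℝ)..t, (t - s) ^ m / (Nat.factorial m) * g s := by
  obtain ⟨ht0, htC⟩ := ht
  set F : ℝ → ℝ := fun s => (t - s) ^ (m + 1) / (Nat.factorial (m + 1)) * g s with hF
  set F' : ℝ → ℝ := fun s => (t - s) ^ (m + 1) / (Nat.factorial (m + 1)) * g' s
      - (t - s) ^ m / (Nat.factorial m) * g s with hF'
  have hIccsub : Set.Icc (0 : ℝ) t ⊆ Set.Icc 0 C := Set.Icc_subset_Icc le_rfl htC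
  have hcontF : ContinuousOn F (Set.Icc 0 t) :=
    ((((continuousOn_const.sub continuousOn_id).pow _).div_const _).mul
      (hgc.mono hIccsub))
  have hcA : ContinuousOn (fun s => (t - s) ^ (m + 1) / (Nat.factorial (m + 1)) * g' s)
      (Set.Icc 0 t) :=
    ((((continuousOn_const.sub continuousOn_id).pow _).div_const _).mul (hg'c.mono hIccsub))
  have hcB : ContinuousOn (fun s => (t - s) ^ m / (Nat.factorial m) * g s) (Set.Icc 0 t) :=
    ((((continuousOn_const.sub continuousOn_id).pow _).div_const _).mul (hgc.mono hIccsub))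
  have hintA : IntervalIntegrable
      (fun s => (t - s) ^ (m + 1) / (Nat.factorial (m + 1)) * g' s) volume 0 t := by
    apply ContinuousOn.intervalIntegrable
    rwa [Set.uIcc_of_le ht0]
  have hintB : IntervalIntegrable
      (fun s => (t - s) ^ m / (Nat.factorial m) * g s) volume 0 t := by
    apply ContinuousOn.intervalIntegrable
    rwa [Set.uIcc_of_le ht0]
  have hderiv : ∀ x ∈ Set.Ioo (0 : ℝ) t, HasDerivWithinAt F (F' x) (Set.Ioi x) x := by
    intro x hx
    have hxC : x ∈ Set.Icc (0 : ℝ) C := ⟨hx.1.le, (hx.2.trans_le htC).le⟩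
    have hg_at : HasDerivAt g (g' x) x :=
      (hg' x hxC).hasDerivAt (Icc_mem_nhds hx.1 (hx.2.trans_le htC))
    have h1 : HasDerivAt (fun s : ℝ => (t - s) ^ (m + 1) / (Nat.factorial (m + 1)))
        (((m + 1 : ℕ) * (t - x) ^ m * (-1)) / (Nat.factorial (m + 1))) x := by
      have hbase : HasDerivAt (fun s : ℝ => t - s) (-1) x := by
        simpa using (hasDerivAt_id x).const_sub t
      simpa using (hbase.pow (m + 1)).div_const (Nat.factorial (m + 1))
    have hprod := h1.mul hg_at
    have heq : ((m + 1 : ℕ) * (t - x) ^ m * (-1)) / (Nat.factorial (m + 1)) * g x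
        + (t - x) ^ (m + 1) / (Nat.factorial (m + 1)) * g' x = F' x := by
      have hfac : (Nat.factorial (m + 1) : ℝ) = (m + 1) * Nat.factorial m := by
        exact_mod_cast Nat.factorial_succ m
      rw [hF']
      field_simp [hfac]
      rw [hfac]
      push_cast
      ring
    rw [← heq]
    exact hprod.hasDerivWithinAt
  have hintF' : IntervalIntegrable F' volume 0 t := hintA.sub hintB
  have hFTC := intervalIntegral.integral_eq_sub_of_hasDeriv_right_of_le ht0 hcontF hderiv hintF'
  have hFt : F t = 0 := by simp [hF]
  have hF0 : F 0 = t ^ (m + 1) / (Nat.factorial (m + 1)) * g 0 := by simp [hF]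
  have hsub := intervalIntegral.integral_sub hintA hintB
  rw [hF'] at hFTC
  rw [hsub, hFt, hF0] at hFTC
  linarith
set_option maxHeartbeats 800000 in
theorem stmt_4 (C : ℝ) (hC : 0 < C) (k l : ℕ) (hl : 1 ≤ l) (hlk : l < k)
    (X : ℝ → ℝ) (hX : ContDiffOn ℝ (l : ℕ) X (Set.Icc 0 C)) :
    (∀ t ∈ Set.Icc (0 : ℝ) C,
      (∫ s in (0 : ℝ)..C, greenK k t s * iteratedDerivWithin l X (Set.Icc 0 C) s) -
        (∫ s in (0 : ℝ)..C, greenK (k - l) t s * X s) =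
        -∑ m ∈ Finset.Icc 1 l,
            iteratedDerivWithin (l - m) X (Set.Icc 0 C) 0 *
              t ^ (k - m) / (Nat.factorial (k - m))) ∧
    ∃ p : Polynomial ℝ, p.degree < k ∧ ∀ t ∈ Set.Icc (0 : ℝ) C,
      (∫ s in (0 : ℝ)..C, greenK k t s * iteratedDerivWithin l X (Set.Icc 0 C) s) -
        (∫ s in (0 : ℝ)..C, greenK (k - l) t s * X s) = p.eval t := by
  have hud : UniqueDiffOn ℝ (Set.Icc (0 : ℝ) C) := uniqueDiffOn_Icc hC
  set D : ℕ → ℝ → ℝ := fun i => iteratedDerivWithin i X (Set.Icc 0 C) with hD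
  have hDc : ∀ i ≤ l, ContinuousOn (D i) (Set.Icc 0 C) := fun i hi =>
    hX.continuousOn_iteratedDerivWithin (by exact_mod_cast hi) hud
  have hDd : ∀ i, i < l → ∀ s ∈ Set.Icc (0 : ℝ) C,
      HasDerivWithinAt (D i) (D (i + 1) s) (Set.Icc 0 C) s := by
    intro i hi s hs
    have hdiff := (hX.differentiableOn_iteratedDerivWithin (by exact_mod_cast hi) hud) s hs
    have h := hdiff.hasDerivWithinAt
    rwa [show D (i + 1) s = derivWithin (D i) (Set.Icc 0 C) s from
      congrFun iteratedDerivWithin_succ s]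
  have main : ∀ t ∈ Set.Icc (0 : ℝ) C,
      (∫ s in (0 : ℝ)..C, greenK k t s * iteratedDerivWithin l X (Set.Icc 0 C) s) -
        (∫ s in (0 : ℝ)..C, greenK (k - l) t s * X s) =
        -∑ m ∈ Finset.Icc 1 l,
            iteratedDerivWithin (l - m) X (Set.Icc 0 C) 0 *
              t ^ (k - m) / (Nat.factorial (k - m)) := by
    intro t ht
    have key : ∀ j, j ≤ l →
        (∫ s in (0 : ℝ)..t, (t - s) ^ (k - 1) / (Nat.factorial (k - 1)) * D l s)
          = (∫ s in (0 : ℝ)..t, (t - s) ^ (k - 1 - j) / (Nat.factorial (k - 1 - j)) * D (l - j) s)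
            - ∑ m ∈ Finset.Icc 1 j, D (l - m) 0 * t ^ (k - m) / (Nat.factorial (k - m)) := by
      intro j
      induction j with
      | zero => simp
      | succ j ih =>
        intro hj1
        have hj : j ≤ l := Nat.le_of_succ_le hj1
        rw [ih hj]
        have e1 : k - 1 - j = (k - 1 - (j + 1)) + 1 := by omega
        have e2 : l - j = (l - (j + 1)) + 1 := by omega
        have hstep := ibp_step C t ht (k - 1 - (j + 1)) (D (l - (j + 1))) (D (l - j))
          (hDc _ (by omega))
          (by intro s hs
              have := hDd (l - (j + 1)) (by omega) s hs
              rwa [← e2] at this)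
          (hDc _ (by omega))
        rw [e2] at hstep
        rw [e1, e2, hstep]
        rw [Finset.sum_Icc_succ_top (by omega : 1 ≤ j + 1)]
        have e3 : k - 1 - (j + 1) + 1 = k - (j + 1) := by omega
        rw [e3]
        ring
    have hk1 : k = (k - 1) + 1 := by omega
    have hkl1 : k - l = (k - l - 1) + 1 := by omega
    have g1 : (∫ s in (0 : ℝ)..C, greenK k t s * D l s)
        = ∫ s in (0 : ℝ)..t, (t - s) ^ (k - 1) / (Nat.factorial (k - 1)) * D l s := by
      rw [hk1]; exact green_reduce C t ht (k - 1) (D l) (hDc l le_rfl)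
    have g2 : (∫ s in (0 : ℝ)..C, greenK (k - l) t s * X s)
        = ∫ s in (0 : ℝ)..t, (t - s) ^ (k - l - 1) / (Nat.factorial (k - l - 1)) * X s := by
      rw [hkl1]
      exact green_reduce C t ht (k - l - 1) X
        (by simpa [hD, iteratedDerivWithin_zero] using hDc 0 (by omega))
    have hkey := key l le_rfl
    have e4 : k - 1 - l = k - l - 1 := by omega
    have e5 : D (l - l) = X := by
      simp [hD, Nat.sub_self, iteratedDerivWithin_zero]
    rw [e4, e5] at hkey
    show (∫ s in (0 : ℝ)..C, greenK k t s * D l s) -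
        (∫ s in (0 : ℝ)..C, greenK (k - l) t s * X s) = _
    rw [g1, g2, hkey]
    ring
  refine ⟨main, ?_⟩
  refine ⟨∑ m ∈ Finset.Icc 1 l, Polynomial.C
      (-(iteratedDerivWithin (l - m) X (Set.Icc 0 C) 0) / (Nat.factorial (k - m)))
      * Polynomial.X ^ (k - m), ?_, ?_⟩
  · refine lt_of_le_of_lt (Polynomial.degree_sum_le _ _) ?_
    rw [Finset.sup_lt_iff (by exact_mod_cast WithBot.bot_lt_coe k)]
    intro m hm
    refine lt_of_le_of_lt (Polynomial.degree_C_mul_X_pow_le _ _) ?_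
    exact_mod_cast Nat.sub_lt (by omega) (Finset.mem_Icc.mp hm).1
  · intro t ht
    rw [main t ht]
    simp only [Polynomial.eval_finset_sum, Polynomial.eval_mul, Polynomial.eval_C,
      Polynomial.eval_pow, Polynomial.eval_X]
    rw [← Finset.sum_neg_distrib]
    refine Finset.sum_congr rfl fun m _ => ?_
    ring
end

section
/- (Integral form of a general-order ODE, case k = K.) Let X ∈ C^K([0,C]) and f continuous on [0,C], let ω₁,…,ω_{K−1} ∈ ℝ. Then X satisfies X^{(K)}(t) + Σ_{l=1}^{K−1} ω_l X^{(l)}(t) = f(t) for all t ∈ [0,C] if and only if there exists a polynomial g of degree at most K−1 such that X(t) + Σ_{l=1}^{K−1} ω_l ∫₀^C G^{K−l}(t,s) X(s) ds = g(t) + ∫₀^C G^K(t,s) f(s) ds for all t ∈ [0,C]. -/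
open MeasureTheory Set intervalIntegral



noncomputable def IkOp (h : ℝ → ℝ) : ℕ → ℝ → ℝ
  | 0 => h
  | (j+1) => fun t => ∫ s in (0:ℝ)..t, (t - s)^j / (Nat.factorial j) * h s

lemma ftc_within {C : ℝ} {h : ℝ → ℝ} (hh : ContinuousOn h (Set.Icc 0 C))
    {t : ℝ} (ht : t ∈ Set.Icc (0:ℝ) C) :
    HasDerivWithinAt (fun u => ∫ s in (0:ℝ)..u, h s) (h t) (Set.Icc 0 C) t := by
  haveI : Fact (t ∈ Set.Icc (0:ℝ) C) := ⟨ht⟩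
  have hsub : Set.uIcc 0 t ⊆ Set.Icc 0 C := by
    rw [Set.uIcc_of_le ht.1]; exact Set.Icc_subset_Icc le_rfl ht.2
  exact integral_hasDerivWithinAt_right ((hh.mono hsub).intervalIntegrable)
    (hh.stronglyMeasurableAtFilter_nhdsWithin measurableSet_Icc t) (hh t ht)

lemma IkOp_eq_sum {C : ℝ} {h : ℝ → ℝ} (hh : ContinuousOn h (Set.Icc 0 C)) (j : ℕ)
    {t : ℝ} (ht : t ∈ Set.Icc (0:ℝ) C) :
    IkOp h (j+1) t = ∑ i ∈ Finset.range (j+1),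
      ((j.choose i : ℝ) * (-1)^(j-i) / (Nat.factorial j)) *
        (t^i * ∫ s in (0:ℝ)..t, s^(j-i) * h s) := by
  have hsub : Set.uIcc 0 t ⊆ Set.Icc 0 C := by
    rw [Set.uIcc_of_le ht.1]; exact Set.Icc_subset_Icc le_rfl ht.2
  have hint : ∀ i : ℕ, IntervalIntegrable (fun s => s^i * h s) volume 0 t := fun i =>
    ((continuousOn_pow i).mul (hh.mono hsub)).intervalIntegrable
  have expand : ∀ s : ℝ, (t - s)^j / (Nat.factorial j) * h s
      = ∑ i ∈ Finset.range (j+1),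
        ((j.choose i : ℝ) * (-1)^(j-i) / (Nat.factorial j)) * (t^i * (s^(j-i) * h s)) := by
    intro s
    rw [sub_eq_add_neg, add_pow, Finset.sum_div, Finset.sum_mul]
    congr 1; funext i; ring_nf
  have : IkOp h (j+1) t = ∫ s in (0:ℝ)..t, ∑ i ∈ Finset.range (j+1),
      ((j.choose i : ℝ) * (-1)^(j-i) / (Nat.factorial j)) * (t^i * (s^(j-i) * h s)) := by
    show (∫ s in (0:ℝ)..t, (t - s)^j / (Nat.factorial j) * h s) = _
    exact intervalIntegral.integral_congr fun s _ => expand s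
  rw [this, intervalIntegral.integral_finset_sum]
  · exact Finset.sum_congr rfl fun i _ => by
      rw [intervalIntegral.integral_const_mul, intervalIntegral.integral_const_mul]
  · exact fun i _ => ((hint (j-i)).const_mul _).const_mul _

lemma hasDerivWithinAt_IkOp {C : ℝ} {h : ℝ → ℝ} (hh : ContinuousOn h (Set.Icc 0 C)) (j : ℕ)
    {t : ℝ} (ht : t ∈ Set.Icc (0:ℝ) C) :
    HasDerivWithinAt (IkOp h (j+1)) (IkOp h j t) (Set.Icc 0 C) t := by
  match j with
  | 0 =>
    have : IkOp h 1 = fun u => ∫ s in (0:ℝ)..u, h s := by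
      funext u
      show (∫ s in (0:ℝ)..u, (u - s)^0 / (Nat.factorial 0) * h s) = _
      simp
    rw [this]
    exact ftc_within hh ht
  | (k+1) =>
    have hder : HasDerivWithinAt
        (fun u => ∑ i ∈ Finset.range (k+2),
          (((k+1).choose i : ℝ) * (-1)^(k+1-i) / (Nat.factorial (k+1))) *
            (u^i * ∫ s in (0:ℝ)..u, s^(k+1-i) * h s))
        (∑ i ∈ Finset.range (k+2),
          (((k+1).choose i : ℝ) * (-1)^(k+1-i) / (Nat.factorial (k+1))) *
            ((i : ℝ) * t^(i-1) * (∫ s in (0:ℝ)..t, s^(k+1-i) * h s)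
              + t^i * (t^(k+1-i) * h t)))
        (Set.Icc 0 C) t := by
      refine HasDerivWithinAt.fun_sum fun i _ => ?_
      refine HasDerivWithinAt.const_mul _ ?_
      exact (hasDerivAt_pow i t).hasDerivWithinAt.mul
        (ftc_within ((continuousOn_pow _).mul hh) ht)
    have hval : (∑ i ∈ Finset.range (k+2),
        (((k+1).choose i : ℝ) * (-1)^(k+1-i) / (Nat.factorial (k+1))) *
          ((i : ℝ) * t^(i-1) * (∫ s in (0:ℝ)..t, s^(k+1-i) * h s)
            + t^i * (t^(k+1-i) * h t)))
        = IkOp h (k+1) t := by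
      rw [IkOp_eq_sum hh k ht]
      have split : ∀ i ∈ Finset.range (k+2),
          (((k+1).choose i : ℝ) * (-1)^(k+1-i) / (Nat.factorial (k+1))) *
            ((i : ℝ) * t^(i-1) * (∫ s in (0:ℝ)..t, s^(k+1-i) * h s)
              + t^i * (t^(k+1-i) * h t))
          = (((k+1).choose i : ℝ) * (-1)^(k+1-i) / (Nat.factorial (k+1))) *
              ((i : ℝ) * t^(i-1) * (∫ s in (0:ℝ)..t, s^(k+1-i) * h s))
            + (((k+1).choose i : ℝ) * (-1)^(k+1-i)) *
                (t^(k+1) * h t / (Nat.factorial (k+1))) := by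
        intro i hi
        have hik : i + (k+1-i) = k+1 := by
          have := Finset.mem_range.mp hi; omega
        rw [show (t:ℝ)^(k+1) = t^i * t^(k+1-i) by rw [← pow_add, hik]]
        ring
      rw [Finset.sum_congr rfl split, Finset.sum_add_distrib]
      have key : (∑ i ∈ Finset.range (k+2), (((k+1).choose i : ℝ) * (-1)^(k+1-i))) = 0 := by
        have hap := add_pow (1:ℝ) (-1) (k+1)
        have h0 : (1:ℝ) + -1 = 0 := by norm_num
        rw [h0, zero_pow (Nat.succ_ne_zero k)] at hap
        simp only [one_pow, one_mul] at hap
        rw [Finset.sum_congr rfl fun i _ => mul_comm (((k+1).choose i : ℝ)) ((-1:ℝ)^(k+1-i))]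
        exact hap.symm
      have h2 : (∑ i ∈ Finset.range (k+2),
          (((k+1).choose i : ℝ) * (-1)^(k+1-i)) * (t^(k+1) * h t / (Nat.factorial (k+1)))) = 0 := by
        rw [← Finset.sum_mul, key, zero_mul]
      rw [h2, add_zero, Finset.sum_range_succ']
      simp only [Nat.cast_zero, zero_mul, mul_zero, add_zero]
      refine Finset.sum_congr rfl fun i hi => ?_
      have hi' : i < k+1 := Finset.mem_range.mp hi
      have hsub1 : k+1-(i+1) = k-i := by omega
      have hch : ((k:ℝ) + 1) * (k.choose i) = ((k+1).choose (i+1) : ℝ) * ((i:ℝ)+1) := by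
        exact_mod_cast congrArg (Nat.cast (R := ℝ)) (Nat.add_one_mul_choose_eq k i)
      have hfac : ((Nat.factorial (k+1) : ℕ) : ℝ) = ((k:ℝ)+1) * (Nat.factorial k : ℝ) := by
        rw [Nat.factorial_succ]; push_cast; ring
      have hk0 : (Nat.factorial k : ℝ) ≠ 0 := Nat.cast_ne_zero.mpr (Nat.factorial_ne_zero k)
      simp only [hsub1, Nat.add_sub_cancel]
      rw [hfac]
      push_cast
      field_simp
      linear_combination (-(t^i * (∫ s in (0:ℝ)..t, s^(k-i) * h s))) * hch
    rw [← hval]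
    exact hder.congr (fun u hu => IkOp_eq_sum hh (k+1) hu) (IkOp_eq_sum hh (k+1) ht)


lemma poly_deriv (a : ℕ → ℝ) (K : ℕ) (t : ℝ) :
    HasDerivAt (fun u => ∑ i ∈ Finset.range (K+1), a i * u^i)
      (∑ i ∈ Finset.range K, ((i:ℝ)+1) * a (i+1) * t^i) t := by
  have h : HasDerivAt (fun u => ∑ i ∈ Finset.range (K+1), a i * u^i)
      (∑ i ∈ Finset.range (K+1), a i * ((i:ℝ) * t^(i-1))) t :=
    HasDerivAt.fun_sum fun i _ => (hasDerivAt_pow i t).const_mul (a i)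
  convert h using 1
  rw [Finset.sum_range_succ']
  simp only [Nat.cast_zero, zero_mul, mul_zero, add_zero, Nat.add_sub_cancel]
  refine Finset.sum_congr rfl fun i _ => ?_
  push_cast
  ring

lemma chain_poly_of_zero {C : ℝ} (hC : 0 < C) :
    ∀ (K : ℕ) (D : ℕ → ℝ → ℝ),
    (∀ m, m < K → ∀ t ∈ Set.Icc (0:ℝ) C,
        HasDerivWithinAt (D m) (D (m+1) t) (Set.Icc 0 C) t) →
    (∀ t ∈ Set.Icc (0:ℝ) C, D K t = 0) →
    ∃ a : ℕ → ℝ, ∀ t ∈ Set.Icc (0:ℝ) C, D 0 t = ∑ i ∈ Finset.range K, a i * t^i := by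
  intro K
  induction K with
  | zero =>
    intro D _ hz
    exact ⟨fun _ => 0, fun t ht => by simpa using hz t ht⟩
  | succ K IH =>
    intro D hchain hz
    obtain ⟨b, hb⟩ := IH (fun m => D (m+1))
      (fun m hm t ht => hchain (m+1) (by omega) t ht) hz
    set P : ℝ → ℝ := fun u => ∑ i ∈ Finset.range K, (b i / ((i:ℝ)+1)) * u^(i+1) with hP
    have hPd : ∀ t : ℝ, HasDerivAt P (∑ i ∈ Finset.range K, b i * t^i) t := by
      intro t
      have h : HasDerivAt P
          (∑ i ∈ Finset.range K, (b i / ((i:ℝ)+1)) * (((i:ℕ)+1 : ℕ) * t^((i+1)-1))) t :=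
        HasDerivAt.fun_sum fun i _ => (hasDerivAt_pow (i+1) t).const_mul _
      convert h using 1
      refine Finset.sum_congr rfl fun i _ => ?_
      have : ((i:ℝ)+1) ≠ 0 := by positivity
      push_cast
      field_simp
    have hg : ∀ t ∈ Set.Icc (0:ℝ) C,
        HasDerivWithinAt (fun u => D 0 u - P u) 0 (Set.Icc 0 C) t := by
      intro t ht
      have := (hchain 0 (by omega) t ht).sub ((hPd t).hasDerivWithinAt)
      rwa [hb t ht, sub_self] at this
    have hconst : ∀ t ∈ Set.Icc (0:ℝ) C, D 0 t - P t = D 0 0 - P 0 := by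
      intro t ht
      have h0 : (0:ℝ) ∈ Set.Icc (0:ℝ) C := by constructor <;> [rfl; exact hC.le] <;> rfl
      have := Convex.norm_image_sub_le_of_norm_hasDerivWithin_le
        (C := (0:ℝ)) (f' := fun _ => (0:ℝ)) (fun x hx => hg x hx)
        (fun x _ => by simp) (convex_Icc 0 C) h0 ht
      simp only [mul_comm, zero_mul, norm_le_zero_iff, sub_eq_zero] at this
      rw [this]
    refine ⟨fun n => match n with
      | 0 => D 0 0 - P 0
      | (i+1) => b i / ((i:ℝ)+1), fun t ht => ?_⟩
    rw [Finset.sum_range_succ']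
    simp only [pow_zero, mul_one]
    have := hconst t ht
    have hPt : P t = ∑ i ∈ Finset.range K, (b i / ((i:ℝ)+1)) * t^(i+1) := rfl
    rw [← hPt]
    linarith [hconst t ht]

lemma chain_zero_of_poly {C : ℝ} (hC : 0 < C) :
    ∀ (K : ℕ) (D : ℕ → ℝ → ℝ) (a : ℕ → ℝ),
    (∀ m, m < K → ∀ t ∈ Set.Icc (0:ℝ) C,
        HasDerivWithinAt (D m) (D (m+1) t) (Set.Icc 0 C) t) →
    (∀ t ∈ Set.Icc (0:ℝ) C, D 0 t = ∑ i ∈ Finset.range K, a i * t^i) →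
    ∀ t ∈ Set.Icc (0:ℝ) C, D K t = 0 := by
  intro K
  induction K with
  | zero =>
    intro D a _ hp t ht
    simpa using hp t ht
  | succ K IH =>
    intro D a hchain hp
    have hD1 : ∀ t ∈ Set.Icc (0:ℝ) C,
        D 1 t = ∑ i ∈ Finset.range K, ((i:ℝ)+1) * a (i+1) * t^i := by
      intro t ht
      have hud := uniqueDiffOn_Icc hC t ht
      have h1 : derivWithin (D 0) (Set.Icc 0 C) t = D 1 t :=
        (hchain 0 (by omega) t ht).derivWithin hud
      have h2 : derivWithin (D 0) (Set.Icc 0 C) t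
          = derivWithin (fun u => ∑ i ∈ Finset.range (K+1), a i * u^i) (Set.Icc 0 C) t :=
        derivWithin_congr (fun y hy => hp y hy) (hp t ht)
      have h3 : derivWithin (fun u => ∑ i ∈ Finset.range (K+1), a i * u^i) (Set.Icc 0 C) t
          = ∑ i ∈ Finset.range K, ((i:ℝ)+1) * a (i+1) * t^i :=
        (poly_deriv a K t).hasDerivWithinAt.derivWithin hud
      rw [← h1, h2, h3]
    exact IH (fun m => D (m+1)) (fun i => ((i:ℝ)+1) * a (i+1))
      (fun m hm t ht => hchain (m+1) (by omega) t ht) hD1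

lemma greenK_integral {C : ℝ} {h : ℝ → ℝ} (hh : ContinuousOn h (Set.Icc 0 C)) (m : ℕ)
    {t : ℝ} (ht : t ∈ Set.Icc (0:ℝ) C) :
    (∫ s in (0:ℝ)..C, greenK (m+1) t s * h s) = IkOp h (m+1) t := by
  have h0C : (0:ℝ) ≤ C := le_trans ht.1 ht.2
  set g1 : ℝ → ℝ := fun s => (t - s)^m / (Nat.factorial m) * h s with hg1
  have hcont : ContinuousOn g1 (Set.Icc 0 C) :=
    (Continuous.continuousOn (by continuity)).mul hh
  have hpt : ∀ s, greenK (m+1) t s * h s = (Set.Iic t).indicator g1 s := by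
    intro s
    simp only [greenK, Set.indicator, Set.mem_Iic, Nat.add_sub_cancel, hg1]
    split_ifs <;> simp
  have hgi : IntervalIntegrable g1 volume 0 C :=
    (hcont.mono (by rw [Set.uIcc_of_le h0C] : Set.uIcc (0:ℝ) C ⊆ _)).intervalIntegrable
  have hind : ∀ a b : ℝ, Set.uIcc a b ⊆ Set.uIcc 0 C →
      IntervalIntegrable ((Set.Iic t).indicator g1) volume a b := by
    intro a b hab
    have := hgi.mono_set hab
    rw [intervalIntegrable_iff] at this ⊢
    exact this.indicator measurableSet_Iic
  have huIcc : Set.uIcc (0:ℝ) C = Set.Icc 0 C := Set.uIcc_of_le h0C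
  have hsub1 : Set.uIcc (0:ℝ) t ⊆ Set.uIcc 0 C := by
    rw [huIcc, Set.uIcc_of_le ht.1]; exact Set.Icc_subset_Icc le_rfl ht.2
  have hsub2 : Set.uIcc t C ⊆ Set.uIcc 0 C := by
    rw [huIcc, Set.uIcc_of_le ht.2]; exact Set.Icc_subset_Icc ht.1 le_rfl
  calc (∫ s in (0:ℝ)..C, greenK (m+1) t s * h s)
      = ∫ s in (0:ℝ)..C, (Set.Iic t).indicator g1 s :=
        intervalIntegral.integral_congr fun s _ => hpt s
    _ = (∫ s in (0:ℝ)..t, (Set.Iic t).indicator g1 s)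
        + ∫ s in t..C, (Set.Iic t).indicator g1 s :=
        (intervalIntegral.integral_add_adjacent_intervals (hind 0 t hsub1)
          (hind t C hsub2)).symm
    _ = (∫ s in (0:ℝ)..t, g1 s) + 0 := by
        congr 1
        · refine intervalIntegral.integral_congr fun s hs => ?_
          rw [Set.uIcc_of_le ht.1] at hs
          exact Set.indicator_of_mem (Set.mem_Iic.mpr hs.2) g1
        · rw [← intervalIntegral.integral_zero (a := t) (b := C) (μ := volume) (E := ℝ)]
          refine intervalIntegral.integral_congr_ae ?_
          filter_upwards with s hs
          rw [Set.uIoc_of_le ht.2] at hs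
          exact Set.indicator_of_notMem (by simp [Set.mem_Iic]; linarith [hs.1]) g1
    _ = IkOp h (m+1) t := by rw [add_zero]; rfl



/-- Derivative-free (order-K) integral reformulation of the general-order ODE. -/
theorem stmt_6 (C : ℝ) (hC : 0 < C) (K : ℕ) (hK : 1 ≤ K)
    (X f : ℝ → ℝ) (hX : ContDiffOn ℝ (K : ℕ) X (Set.Icc 0 C))
    (hf : ContinuousOn f (Set.Icc 0 C)) (ω : ℕ → ℝ) :
    (∀ t ∈ Set.Icc (0 : ℝ) C,
      iteratedDerivWithin K X (Set.Icc 0 C) t +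
        ∑ l ∈ Finset.Icc 1 (K - 1), ω l * iteratedDerivWithin l X (Set.Icc 0 C) t = f t) ↔
    (∃ c : Fin K → ℝ, ∀ t ∈ Set.Icc (0 : ℝ) C,
      X t + ∑ l ∈ Finset.Icc 1 (K - 1), ω l * ∫ s in (0 : ℝ)..C, greenK (K - l) t s * X s =
        (∑ i : Fin K, c i * t ^ (i : ℕ)) + ∫ s in (0 : ℝ)..C, greenK K t s * f s) := by
  have hXc : ContinuousOn X (Set.Icc 0 C) := hX.continuousOn
  have hud : UniqueDiffOn ℝ (Set.Icc (0:ℝ) C) := uniqueDiffOn_Icc hC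
  -- chain for iterated derivatives of X
  have hX_chain : ∀ m, m < K → ∀ t ∈ Set.Icc (0:ℝ) C,
      HasDerivWithinAt (iteratedDerivWithin m X (Set.Icc 0 C))
        (iteratedDerivWithin (m+1) X (Set.Icc 0 C) t) (Set.Icc 0 C) t := by
    intro m hm t ht
    have hdiff := hX.differentiableOn_iteratedDerivWithin (m := m)
      (by exact_mod_cast hm) hud
    have := (hdiff t ht).hasDerivWithinAt
    rwa [← iteratedDerivWithin_succ] at this
  -- the derivative cascade
  set D : ℕ → ℝ → ℝ := fun m t =>
    iteratedDerivWithin m X (Set.Icc 0 C) t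
    + (∑ l ∈ Finset.Icc 1 (K-1), ω l *
        (if K - l ≤ m then iteratedDerivWithin (m - (K - l)) X (Set.Icc 0 C) t
         else IkOp X (K - l - m) t))
    - IkOp f (K - m) t with hD
  have hD0 : ∀ t, D 0 t =
      X t + (∑ l ∈ Finset.Icc 1 (K-1), ω l * IkOp X (K - l) t) - IkOp f K t := by
    intro t
    rw [hD]
    simp only [iteratedDerivWithin_zero, Nat.sub_zero]
    congr 2
    refine Finset.sum_congr rfl fun l hl => ?_
    have hl' := Finset.mem_Icc.mp hl
    rw [if_neg (by omega)]
  have hDK : ∀ t, D K t =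
      iteratedDerivWithin K X (Set.Icc 0 C) t
      + (∑ l ∈ Finset.Icc 1 (K-1), ω l * iteratedDerivWithin l X (Set.Icc 0 C) t)
      - f t := by
    intro t
    rw [hD]
    simp only [Nat.sub_self]
    have hsum : (∑ l ∈ Finset.Icc 1 (K-1), ω l *
        (if K - l ≤ K then iteratedDerivWithin (K - (K - l)) X (Set.Icc 0 C) t
         else IkOp X (K - l - K) t))
        = ∑ l ∈ Finset.Icc 1 (K-1), ω l * iteratedDerivWithin l X (Set.Icc 0 C) t := by
      refine Finset.sum_congr rfl fun l hl => ?_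
      have hl' := Finset.mem_Icc.mp hl
      rw [if_pos (by omega), Nat.sub_sub_self (by omega)]
    rw [hsum]
    rfl
  have hchain : ∀ m, m < K → ∀ t ∈ Set.Icc (0:ℝ) C,
      HasDerivWithinAt (D m) (D (m+1) t) (Set.Icc 0 C) t := by
    intro m hm t ht
    rw [hD]
    refine HasDerivWithinAt.sub (HasDerivWithinAt.add ?_ ?_) ?_
    · exact hX_chain m hm t ht
    · refine HasDerivWithinAt.fun_sum fun l hl => ?_
      have hl' := Finset.mem_Icc.mp hl
      refine HasDerivWithinAt.const_mul _ ?_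
      by_cases hle : K - l ≤ m
      · have hle1 : K - l ≤ m + 1 := by omega
        have h1 : m + 1 - (K - l) = (m - (K - l)) + 1 := by omega
        simp only [if_pos hle, if_pos hle1, h1]
        exact hX_chain (m - (K-l)) (by omega) t ht
      · have h1 : K - l - m = (K - l - m - 1) + 1 := by omega
        have hd := hasDerivWithinAt_IkOp hXc (K - l - m - 1) ht
        rw [← h1] at hd
        simp only [if_neg hle]
        by_cases hle2 : K - l ≤ m + 1
        · have h3 : m + 1 - (K - l) = 0 := by omega
          simp only [if_pos hle2, h3, iteratedDerivWithin_zero]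
          have h2 : K - l - m - 1 = 0 := by omega
          rw [h2] at hd
          exact hd
        · have h2 : K - l - (m+1) = K - l - m - 1 := by omega
          simp only [if_neg hle2, h2]
          exact hd
    · have h1 : K - m = (K - (m+1)) + 1 := by omega
      rw [h1]
      exact hasDerivWithinAt_IkOp hf (K - (m+1)) ht
  -- rewrite both sides
  constructor
  · intro hODE
    have hz : ∀ t ∈ Set.Icc (0:ℝ) C, D K t = 0 := by
      intro t ht
      rw [hDK t, hODE t ht, sub_self]
    obtain ⟨a, ha⟩ := chain_poly_of_zero hC K D hchain hz
    refine ⟨fun i => a i, fun t ht => ?_⟩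
    have h1 := ha t ht
    rw [hD0 t] at h1
    have hX_int : ∀ l ∈ Finset.Icc 1 (K-1),
        ω l * (∫ s in (0:ℝ)..C, greenK (K - l) t s * X s) = ω l * IkOp X (K - l) t := by
      intro l hl
      have hl' := Finset.mem_Icc.mp hl
      have h2 : K - l = (K - l - 1) + 1 := by omega
      rw [h2, greenK_integral hXc _ ht]
    have hf_int : (∫ s in (0:ℝ)..C, greenK K t s * f s) = IkOp f K t := by
      have h2 : K = (K - 1) + 1 := by omega
      rw [h2, greenK_integral hf _ ht]
    rw [Finset.sum_congr rfl hX_int, hf_int,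
      Fin.sum_univ_eq_sum_range (fun i => a i * t ^ i) K]
    linarith [h1]
  · rintro ⟨c, hc⟩
    have hpoly : ∀ t ∈ Set.Icc (0:ℝ) C, D 0 t
        = ∑ i ∈ Finset.range K, (fun i => if h : i < K then c ⟨i, h⟩ else 0) i * t^i := by
      intro t ht
      have h1 := hc t ht
      have hX_int : ∀ l ∈ Finset.Icc 1 (K-1),
          ω l * (∫ s in (0:ℝ)..C, greenK (K - l) t s * X s) = ω l * IkOp X (K - l) t := by
        intro l hl
        have hl' := Finset.mem_Icc.mp hl
        have h2 : K - l = (K - l - 1) + 1 := by omega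
        rw [h2, greenK_integral hXc _ ht]
      have hf_int : (∫ s in (0:ℝ)..C, greenK K t s * f s) = IkOp f K t := by
        have h2 : K = (K - 1) + 1 := by omega
        rw [h2, greenK_integral hf _ ht]
      rw [Finset.sum_congr rfl hX_int, hf_int] at h1
      have h3 : (∑ i ∈ Finset.range K, (fun i => if h : i < K then c ⟨i, h⟩ else 0) i * t^i)
          = ∑ i : Fin K, c i * t ^ (i : ℕ) := by
        rw [← Fin.sum_univ_eq_sum_range (fun i => (if h : i < K then c ⟨i, h⟩ else 0) * t ^ i) K]
        refine Finset.sum_congr rfl fun i _ => ?_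
        rw [dif_pos i.isLt]
      rw [hD0 t, h3]
      linarith [h1]
    have hz := chain_zero_of_poly hC K D _ hchain hpoly
    intro t ht
    have := hz t ht
    rw [hDK t] at this
    linarith [this]
end

section
/- (Integral form, intermediate order 1 ≤ k ≤ K−1.) Let X ∈ C^K([0,C]), f continuous, ω₁,…,ω_{K−1} ∈ ℝ, and fix 1 ≤ k ≤ K−1. Then X^{(K)}(t) + Σ_{l=1}^{K−1} ω_l X^{(l)}(t) = f(t) on [0,C] if and only if there is a polynomial g of degree ≤ k−1 with X^{(K−k)}(t) + Σ_{l=k+1}^{K−1} ω_l X^{(l−k)}(t) + Σ_{l=1}^{k} ω_l ∫₀^C G^{k−l}(t,s) X(s) ds = g(t) + ∫₀^C G^k(t,s) f(s) ds for all t ∈ [0,C], where the term with l = k is interpreted as ω_k X(t) (since G^0(t,s) = δ(t−s)). -/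
open MeasureTheory intervalIntegral Set

noncomputable def Bint (p : ℕ) (u : ℝ → ℝ) (t : ℝ) : ℝ := ∫ s in (0:ℝ)..t, (-s)^p * u s

lemma hasDerivAt_Bint (p : ℕ) {u : ℝ → ℝ} (hu : Continuous u) (t : ℝ) :
    HasDerivAt (Bint p u) ((-t)^p * u t) t := by
  have hc : Continuous fun s : ℝ => (-s)^p * u s := by continuity
  exact intervalIntegral.integral_hasDerivAt_right (hc.intervalIntegrable _ _)
    hc.aestronglyMeasurable.stronglyMeasurableAtFilter hc.continuousAt

noncomputable def Jf (m : ℕ) (u : ℝ → ℝ) (t : ℝ) : ℝ :=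
  ∫ s in (0:ℝ)..t, (t - s)^m / (Nat.factorial m) * u s

lemma Jf_eq (m : ℕ) {u : ℝ → ℝ} (hu : Continuous u) (t : ℝ) :
    Jf m u t = ∑ i ∈ Finset.range (m+1),
      ((m.choose i : ℝ) / (Nat.factorial m)) * t^i * Bint (m-i) u t := by
  have : ∀ s : ℝ, (t - s)^m / (Nat.factorial m) * u s
      = ∑ i ∈ Finset.range (m+1),
        ((m.choose i : ℝ) / (Nat.factorial m)) * t^i * ((-s)^(m-i) * u s) := by
    intro s
    rw [sub_eq_add_neg, add_pow]
    rw [Finset.sum_div, Finset.sum_mul]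
    refine Finset.sum_congr rfl fun i hi => by ring
  unfold Jf
  rw [intervalIntegral.integral_congr (fun s _ => this s)]
  rw [intervalIntegral.integral_finset_sum]
  · refine Finset.sum_congr rfl fun i hi => ?_
    rw [show (Bint (m-i) u t) = ∫ s in (0:ℝ)..t, (-s)^(m-i) * u s from rfl, ← intervalIntegral.integral_const_mul]
  · intro i hi
    exact (by continuity : Continuous fun s : ℝ =>
      ((m.choose i : ℝ) / (Nat.factorial m)) * t^i * ((-s)^(m-i) * u s)).intervalIntegrable _ _

lemma hasDerivAt_Jf_zero {u : ℝ → ℝ} (hu : Continuous u) (t : ℝ) :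
    HasDerivAt (Jf 0 u) (u t) t := by
  have : Jf 0 u = fun t => ∫ s in (0:ℝ)..t, u s := by
    funext x; unfold Jf; simp
  rw [this]
  exact intervalIntegral.integral_hasDerivAt_right (hu.intervalIntegrable _ _)
    hu.aestronglyMeasurable.stronglyMeasurableAtFilter hu.continuousAt

lemma hasDerivAt_Jf_succ (m : ℕ) {u : ℝ → ℝ} (hu : Continuous u) (t : ℝ) :
    HasDerivAt (Jf (m+1) u) (Jf m u t) t := by
  have hJ : Jf (m+1) u = fun t => ∑ i ∈ Finset.range (m+2),
      (((m+1).choose i : ℝ) / (Nat.factorial (m+1))) * t^i * Bint (m+1-i) u t := by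
    funext x; exact Jf_eq (m+1) hu x
  rw [hJ]
  have hder : HasDerivAt (fun t : ℝ => ∑ i ∈ Finset.range (m+2),
      (((m+1).choose i : ℝ) / (Nat.factorial (m+1))) * t^i * Bint (m+1-i) u t)
      (∑ i ∈ Finset.range (m+2), (((m+1).choose i : ℝ) / (Nat.factorial (m+1))) *
        ((i : ℝ) * t^(i-1) * Bint (m+1-i) u t + t^i * ((-t)^(m+1-i) * u t))) t := by
    refine HasDerivAt.fun_sum fun i hi => ?_
    have h1 : HasDerivAt (fun t : ℝ => t^i * Bint (m+1-i) u t)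
        ((i : ℝ) * t^(i-1) * Bint (m+1-i) u t + t^i * ((-t)^(m+1-i) * u t)) t :=
      (hasDerivAt_pow i t).mul (hasDerivAt_Bint (m+1-i) hu t)
    have := h1.const_mul (((m+1).choose i : ℝ) / (Nat.factorial (m+1)))
    simpa [mul_assoc, mul_add] using this
  convert hder using 1
  rw [show (∑ i ∈ Finset.range (m+2), (((m+1).choose i : ℝ) / (Nat.factorial (m+1))) *
        ((i : ℝ) * t^(i-1) * Bint (m+1-i) u t + t^i * ((-t)^(m+1-i) * u t)))
      = (∑ i ∈ Finset.range (m+2), (((m+1).choose i : ℝ) / (Nat.factorial (m+1))) *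
        ((i : ℝ) * t^(i-1) * Bint (m+1-i) u t))
      + (∑ i ∈ Finset.range (m+2), (((m+1).choose i : ℝ) * t^i * (-t)^(m+1-i)) / (Nat.factorial (m+1)))
        * u t from by rw [Finset.sum_mul, ← Finset.sum_add_distrib]; exact Finset.sum_congr rfl fun i _ => by ring]
  have hzero : (∑ i ∈ Finset.range (m+2), (((m+1).choose i : ℝ) * t^i * (-t)^(m+1-i)) / (Nat.factorial (m+1))) = 0 := by
    rw [← Finset.sum_div]
    have h0 : (0:ℝ) = ∑ i ∈ Finset.range (m+1+1), t^i * (-t)^(m+1-i) * ((m+1).choose i) := by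
      have := add_pow t (-t) (m+1)
      simp only [add_neg_cancel, zero_pow (Nat.succ_ne_zero m)] at this
      exact this
    have heq : (∑ i ∈ Finset.range (m+2), ((m+1).choose i : ℝ) * t^i * (-t)^(m+1-i))
        = ∑ i ∈ Finset.range (m+1+1), t^i * (-t)^(m+1-i) * ((m+1).choose i) :=
      Finset.sum_congr rfl fun i _ => by ring
    rw [heq, ← h0, zero_div]
  rw [hzero, zero_mul, add_zero]
  rw [Jf_eq m hu t, Finset.sum_range_succ' _ (m+1)]
  simp only [Nat.cast_zero, zero_mul, mul_zero, add_zero, Nat.add_sub_cancel, Nat.succ_sub_succ]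
  refine Finset.sum_congr rfl fun i hi => ?_
  have hm : (0:ℝ) < (m:ℝ)+1 := by positivity
  have hfac : ((Nat.factorial (m+1) : ℝ)) = ((m:ℝ)+1) * (Nat.factorial m) := by
    push_cast [Nat.factorial_succ]; ring
  have hch : (((m+1).choose (i+1) : ℝ)) * ((i:ℝ)+1) = ((m:ℝ)+1) * (m.choose i) := by
    have h := Nat.add_one_mul_choose_eq m i
    have h2 : ((Nat.succ m * m.choose i : ℕ) : ℝ) = (((m+1).choose (i+1) * (i+1) : ℕ) : ℝ) := by
      rw [h]
    push_cast at h2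
    linarith [h2]
  have key : (((m+1).choose (i+1) : ℝ))/((Nat.factorial (m+1)):ℝ) * ((i:ℝ)+1)
      = (m.choose i : ℝ)/(Nat.factorial m) := by
    rw [div_mul_eq_mul_div, hch, hfac, mul_div_mul_left _ _ (ne_of_gt hm)]
  push_cast
  rw [← key]; ring_nf; simp [Nat.sub_zero]

lemma green_int {C : ℝ} (m : ℕ) (hm : 1 ≤ m) {u v : ℝ → ℝ} (hu : Continuous u)
    (huv : ∀ s ∈ Set.Icc (0:ℝ) C, v s = u s) {t : ℝ} (ht : t ∈ Set.Icc (0:ℝ) C) :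
    (∫ s in (0:ℝ)..C, greenK m t s * v s) = Jf (m-1) u t := by
  obtain ⟨ht0, htC⟩ := ht
  have hcont : Continuous fun s : ℝ => (t-s)^(m-1)/(Nat.factorial (m-1)) * u s := by continuity
  have eq1 : ∀ s ∈ Set.uIoc (0:ℝ) t, greenK m t s * v s = (t-s)^(m-1)/(Nat.factorial (m-1)) * u s := by
    intro s hs
    rw [Set.uIoc_of_le ht0] at hs
    rw [greenK, if_pos hs.2, huv s ⟨hs.1.le, hs.2.trans htC⟩]
  have eq2 : ∀ s ∈ Set.uIoc t C, greenK m t s * v s = 0 := by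
    intro s hs
    rw [Set.uIoc_of_le htC] at hs
    rw [greenK, if_neg (not_le.mpr hs.1), zero_mul]
  have ae1 : (fun s : ℝ => (t-s)^(m-1)/(Nat.factorial (m-1)) * u s)
      =ᵐ[MeasureTheory.volume.restrict (Set.uIoc (0:ℝ) t)] fun s => greenK m t s * v s :=
    MeasureTheory.ae_restrict_of_forall_mem measurableSet_uIoc fun s hs => (eq1 s hs).symm
  have ae2 : (fun _ : ℝ => (0:ℝ))
      =ᵐ[MeasureTheory.volume.restrict (Set.uIoc t C)] fun s => greenK m t s * v s :=
    MeasureTheory.ae_restrict_of_forall_mem measurableSet_uIoc fun s hs => (eq2 s hs).symm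
  have i1 : IntervalIntegrable (fun s => greenK m t s * v s) MeasureTheory.volume 0 t :=
    (hcont.intervalIntegrable 0 t).congr_ae ae1
  have i2 : IntervalIntegrable (fun s => greenK m t s * v s) MeasureTheory.volume t C :=
    (_root_.intervalIntegrable_const (c := (0:ℝ))).congr_ae ae2
  rw [← intervalIntegral.integral_add_adjacent_intervals i1 i2]
  have h2 : (∫ s in t..C, greenK m t s * v s) = 0 := by
    rw [intervalIntegral.integral_congr_ae (g := fun _ => (0:ℝ)) (Filter.Eventually.of_forall eq2)]
    simp
  rw [h2, add_zero, intervalIntegral.integral_congr_ae (g := fun s => (t-s)^(m-1)/(Nat.factorial (m-1)) * u s)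
    (Filter.Eventually.of_forall eq1)]
  rfl

lemma Dstep {C : ℝ} (hC : 0 < C) {K : ℕ} {X : ℝ → ℝ}
    (hX : ContDiffOn ℝ (K : ℕ) X (Set.Icc 0 C)) {n : ℕ} (hn : n + 1 ≤ K)
    {t : ℝ} (ht : t ∈ Set.Icc (0:ℝ) C) :
    HasDerivWithinAt (iteratedDerivWithin n X (Set.Icc 0 C))
      (iteratedDerivWithin (n+1) X (Set.Icc 0 C) t) (Set.Icc 0 C) t := by
  have hud : UniqueDiffOn ℝ (Set.Icc (0:ℝ) C) := uniqueDiffOn_Icc hC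
  have hdiff : DifferentiableOn ℝ (iteratedDerivWithin n X (Set.Icc 0 C)) (Set.Icc 0 C) :=
    hX.differentiableOn_iteratedDerivWithin (by exact_mod_cast Nat.lt_of_succ_le hn) hud
  have := (hdiff t ht).hasDerivWithinAt
  rwa [← iteratedDerivWithin_succ] at this

lemma Dcont {C : ℝ} (hC : 0 < C) {K : ℕ} {X : ℝ → ℝ}
    (hX : ContDiffOn ℝ (K : ℕ) X (Set.Icc 0 C)) {n : ℕ} (hn : n ≤ K) :
    ContinuousOn (iteratedDerivWithin n X (Set.Icc 0 C)) (Set.Icc 0 C) :=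
  hX.continuousOn_iteratedDerivWithin (by exact_mod_cast hn) (uniqueDiffOn_Icc hC)

lemma poly_up {C : ℝ} (hC : 0 < C) {g g' : ℝ → ℝ}
    (hg : ∀ t ∈ Set.Icc (0:ℝ) C, HasDerivWithinAt g (g' t) (Set.Icc 0 C) t)
    {j : ℕ} (c : Fin j → ℝ) (hc : ∀ t ∈ Set.Icc (0:ℝ) C, g' t = ∑ i : Fin j, c i * t ^ (i:ℕ)) :
    ∃ d : Fin (j+1) → ℝ, ∀ t ∈ Set.Icc (0:ℝ) C, g t = ∑ i : Fin (j+1), d i * t ^ (i:ℕ) := by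
  set Q : ℝ → ℝ := fun t => ∑ i : Fin j, c i / ((i:ℕ)+1) * t ^ ((i:ℕ)+1) with hQ
  have hQd : ∀ t : ℝ, HasDerivAt Q (∑ i : Fin j, c i * t ^ (i:ℕ)) t := by
    intro t
    have : HasDerivAt Q (∑ i : Fin j, c i / ((i:ℕ)+1) * ((((i:ℕ):ℝ)+1) * t ^ (i:ℕ))) t := by
      refine HasDerivAt.fun_sum fun i _ => ?_
      have := (hasDerivAt_pow ((i:ℕ)+1) t).const_mul (c i / ((i:ℕ)+1))
      simpa [Nat.add_sub_cancel, mul_assoc] using this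
    convert this using 1
    refine Finset.sum_congr rfl fun i _ => ?_
    have : (((i:ℕ):ℝ)+1) ≠ 0 := by positivity
    field_simp
  have hsub : ∀ t ∈ Set.Icc (0:ℝ) C, HasDerivWithinAt (fun t => g t - Q t) 0 (Set.Icc 0 C) t := by
    intro t ht
    have := (hg t ht).sub ((hQd t).hasDerivWithinAt)
    rwa [hc t ht, sub_self] at this
  have hconst : ∀ t ∈ Set.Icc (0:ℝ) C, g t - Q t = g 0 - Q 0 := by
    intro t ht
    have h0 : (0:ℝ) ∈ Set.Icc (0:ℝ) C := ⟨le_refl 0, hC.le⟩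
    refine ((convex_Icc (0:ℝ) C).is_const_of_fderivWithin_eq_zero
      (fun x hx => ((hsub x hx).differentiableWithinAt)) ?_ ht h0)
    intro x hx
    have hu : UniqueDiffWithinAt ℝ (Set.Icc (0:ℝ) C) x := uniqueDiffOn_Icc hC x hx
    have := (hsub x hx).hasFDerivWithinAt.fderivWithin hu
    rw [this]
    ext y
    simp
  refine ⟨Fin.cases (g 0 - Q 0) (fun i => c i / ((i:ℕ)+1)), fun t ht => ?_⟩
  rw [Fin.sum_univ_succ]
  simp only [Fin.cases_zero, Fin.cases_succ, Fin.val_zero, pow_zero, mul_one, Fin.val_succ]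
  have := hconst t ht
  have : g t = (g 0 - Q 0) + Q t := by linarith [hconst t ht]
  rw [this, hQ]

lemma poly_down {C : ℝ} (hC : 0 < C) {g g' : ℝ → ℝ}
    (hg : ∀ t ∈ Set.Icc (0:ℝ) C, HasDerivWithinAt g (g' t) (Set.Icc 0 C) t)
    {j : ℕ} (d : Fin (j+1) → ℝ) (hd : ∀ t ∈ Set.Icc (0:ℝ) C, g t = ∑ i : Fin (j+1), d i * t ^ (i:ℕ)) :
    ∃ c : Fin j → ℝ, ∀ t ∈ Set.Icc (0:ℝ) C, g' t = ∑ i : Fin j, c i * t ^ (i:ℕ) := by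
  refine ⟨fun i => d i.succ * ((i:ℕ)+1), fun t ht => ?_⟩
  have hu : UniqueDiffWithinAt ℝ (Set.Icc (0:ℝ) C) t := uniqueDiffOn_Icc hC t ht
  have h1 : g' t = derivWithin g (Set.Icc 0 C) t := ((hg t ht).derivWithin hu).symm
  have hPd : ∀ x : ℝ, HasDerivAt (fun t => ∑ i : Fin (j+1), d i * t ^ (i:ℕ))
      (∑ i : Fin (j+1), d i * (((i:ℕ):ℝ) * x ^ ((i:ℕ)-1))) x := by
    intro x
    refine HasDerivAt.fun_sum fun i _ => ?_
    simpa [mul_assoc] using (hasDerivAt_pow (i:ℕ) x).const_mul (d i)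
  have h2 : derivWithin g (Set.Icc 0 C) t
      = derivWithin (fun t => ∑ i : Fin (j+1), d i * t ^ (i:ℕ)) (Set.Icc 0 C) t :=
    derivWithin_congr (fun x hx => hd x hx) (hd t ht)
  have h3 : derivWithin (fun t => ∑ i : Fin (j+1), d i * t ^ (i:ℕ)) (Set.Icc 0 C) t
      = ∑ i : Fin (j+1), d i * (((i:ℕ):ℝ) * t ^ ((i:ℕ)-1)) :=
    ((hPd t).hasDerivWithinAt).derivWithin hu
  rw [h1, h2, h3, Fin.sum_univ_succ]
  simp only [Fin.val_zero, Nat.cast_zero, zero_mul, mul_zero, zero_add, Fin.val_succ]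
  refine Finset.sum_congr rfl fun i _ => ?_
  simp only [Nat.add_sub_cancel]
  push_cast
  ring

noncomputable def Pfun (C : ℝ) (K : ℕ) (ω : ℕ → ℝ) (X X' f' : ℝ → ℝ) (j : ℕ) (t : ℝ) : ℝ :=
  iteratedDerivWithin (K-(j+1)) X (Set.Icc 0 C) t
  + ∑ l ∈ Finset.Icc (j+2) (K-1), ω l * iteratedDerivWithin (l-(j+1)) X (Set.Icc 0 C) t
  + ∑ l ∈ Finset.Icc 1 j, ω l * Jf (j-l) X' t
  + ω (j+1) * X t
  - Jf j f' t

lemma dP0 {C : ℝ} (hC : 0 < C) {K : ℕ} (hK : 2 ≤ K) {X X' f' : ℝ → ℝ}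
    (hX : ContDiffOn ℝ (K : ℕ) X (Set.Icc 0 C)) (hf'c : Continuous f') (ω : ℕ → ℝ)
    {t : ℝ} (ht : t ∈ Set.Icc (0:ℝ) C) :
    HasDerivWithinAt (Pfun C K ω X X' f' 0)
      (iteratedDerivWithin K X (Set.Icc 0 C) t
        + ∑ l ∈ Finset.Icc 1 (K-1), ω l * iteratedDerivWithin l X (Set.Icc 0 C) t
        - f' t) (Set.Icc 0 C) t := by
  have hPeq : Pfun C K ω X X' f' 0 = fun t =>
      iteratedDerivWithin (K-1) X (Set.Icc 0 C) t
      + ∑ l ∈ Finset.Icc 2 (K-1), ω l * iteratedDerivWithin (l-1) X (Set.Icc 0 C) t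
      + ω 1 * X t - Jf 0 f' t := by
    funext x
    unfold Pfun
    norm_num
  rw [hPeq]
  have h1 : HasDerivWithinAt (iteratedDerivWithin (K-1) X (Set.Icc 0 C))
      (iteratedDerivWithin K X (Set.Icc 0 C) t) (Set.Icc 0 C) t := by
    have := Dstep hC hX (n := K-1) (by omega) ht
    rwa [show K - 1 + 1 = K by omega] at this
  have h2 : HasDerivWithinAt (fun x => ∑ l ∈ Finset.Icc 2 (K-1),
      ω l * iteratedDerivWithin (l-1) X (Set.Icc 0 C) x)
      (∑ l ∈ Finset.Icc 2 (K-1), ω l * iteratedDerivWithin l X (Set.Icc 0 C) t)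
      (Set.Icc 0 C) t := by
    refine HasDerivWithinAt.fun_sum fun l hl => ?_
    rw [Finset.mem_Icc] at hl
    have := (Dstep hC hX (n := l-1) (by omega) ht).const_mul (ω l)
    rwa [show l - 1 + 1 = l by omega] at this
  have h4 : HasDerivWithinAt (fun x => ω 1 * X x)
      (ω 1 * iteratedDerivWithin 1 X (Set.Icc 0 C) t) (Set.Icc 0 C) t := by
    have := (Dstep hC hX (n := 0) (by omega) ht).const_mul (ω 1)
    rwa [iteratedDerivWithin_zero] at this
  have h5 : HasDerivWithinAt (Jf 0 f') (f' t) (Set.Icc 0 C) t :=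
    (hasDerivAt_Jf_zero hf'c t).hasDerivWithinAt
  have := ((h1.add h2).add h4).sub h5
  refine HasDerivWithinAt.congr_deriv this ?_
  have hsplit : ∑ l ∈ Finset.Icc 1 (K-1), ω l * iteratedDerivWithin l X (Set.Icc 0 C) t
      = ω 1 * iteratedDerivWithin 1 X (Set.Icc 0 C) t
        + ∑ l ∈ Finset.Icc 2 (K-1), ω l * iteratedDerivWithin l X (Set.Icc 0 C) t := by
    have hset : Finset.Icc 1 (K-1) = insert 1 (Finset.Icc 2 (K-1)) := by
      ext x; simp only [Finset.mem_Icc, Finset.mem_insert]; omega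
    rw [hset, Finset.sum_insert (by simp)]
  rw [hsplit]; ring

lemma dPs {C : ℝ} (hC : 0 < C) {K : ℕ} (hK : 2 ≤ K) {X X' f' : ℝ → ℝ}
    (hX : ContDiffOn ℝ (K : ℕ) X (Set.Icc 0 C)) (hX'c : Continuous X')
    (hX'eq : ∀ s ∈ Set.Icc (0:ℝ) C, X' s = X s) (hf'c : Continuous f') (ω : ℕ → ℝ)
    {j : ℕ} (hj : j + 2 ≤ K - 1) {t : ℝ} (ht : t ∈ Set.Icc (0:ℝ) C) :
    HasDerivWithinAt (Pfun C K ω X X' f' (j+1)) (Pfun C K ω X X' f' j t) (Set.Icc 0 C) t := by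
  have hset2 : Finset.Icc 1 (j+1) = insert (j+1) (Finset.Icc 1 j) := by
    ext x; simp only [Finset.mem_Icc, Finset.mem_insert]; omega
  have hPeq : Pfun C K ω X X' f' (j+1) = fun x =>
      iteratedDerivWithin (K-(j+2)) X (Set.Icc 0 C) x
      + ∑ l ∈ Finset.Icc (j+3) (K-1), ω l * iteratedDerivWithin (l-(j+2)) X (Set.Icc 0 C) x
      + (∑ l ∈ Finset.Icc 1 j, ω l * Jf ((j-l)+1) X' x + ω (j+1) * Jf 0 X' x)
      + ω (j+2) * X x
      - Jf (j+1) f' x := by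
    funext x
    unfold Pfun
    rw [hset2, Finset.sum_insert (by simp)]
    rw [show j+1+1 = j+2 by omega, show j+1+2 = j+3 by omega, show j+1-(j+1) = 0 by omega]
    have : ∀ l ∈ Finset.Icc 1 j, ω l * Jf (j+1-l) X' x = ω l * Jf ((j-l)+1) X' x := by
      intro l hl
      rw [Finset.mem_Icc] at hl
      rw [show j+1-l = (j-l)+1 by omega]
    rw [Finset.sum_congr rfl this]
    ring
  rw [hPeq]
  have hA : HasDerivWithinAt (iteratedDerivWithin (K-(j+2)) X (Set.Icc 0 C))
      (iteratedDerivWithin (K-(j+1)) X (Set.Icc 0 C) t) (Set.Icc 0 C) t := by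
    have := Dstep hC hX (n := K-(j+2)) (by omega) ht
    rwa [show K-(j+2)+1 = K-(j+1) by omega] at this
  have hB : HasDerivWithinAt (fun x => ∑ l ∈ Finset.Icc (j+3) (K-1),
      ω l * iteratedDerivWithin (l-(j+2)) X (Set.Icc 0 C) x)
      (∑ l ∈ Finset.Icc (j+3) (K-1), ω l * iteratedDerivWithin (l-(j+1)) X (Set.Icc 0 C) t)
      (Set.Icc 0 C) t := by
    refine HasDerivWithinAt.fun_sum fun l hl => ?_
    rw [Finset.mem_Icc] at hl
    have := (Dstep hC hX (n := l-(j+2)) (by omega) ht).const_mul (ω l)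
    rwa [show l-(j+2)+1 = l-(j+1) by omega] at this
  have hC2 : HasDerivWithinAt (fun x => ∑ l ∈ Finset.Icc 1 j, ω l * Jf ((j-l)+1) X' x
      + ω (j+1) * Jf 0 X' x)
      (∑ l ∈ Finset.Icc 1 j, ω l * Jf (j-l) X' t + ω (j+1) * X' t) (Set.Icc 0 C) t := by
    refine HasDerivWithinAt.add
      (HasDerivWithinAt.fun_sum fun l hl =>
        ((hasDerivAt_Jf_succ (j-l) hX'c t).hasDerivWithinAt).const_mul (ω l))
      (((hasDerivAt_Jf_zero hX'c t).hasDerivWithinAt).const_mul (ω (j+1)))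
  have hE : HasDerivWithinAt (fun x => ω (j+2) * X x)
      (ω (j+2) * iteratedDerivWithin 1 X (Set.Icc 0 C) t) (Set.Icc 0 C) t := by
    have := (Dstep hC hX (n := 0) (by omega) ht).const_mul (ω (j+2))
    rwa [iteratedDerivWithin_zero] at this
  have hF : HasDerivWithinAt (Jf (j+1) f') (Jf j f' t) (Set.Icc 0 C) t :=
    (hasDerivAt_Jf_succ j hf'c t).hasDerivWithinAt
  have htot := (((hA.add hB).add hC2).add hE).sub hF
  refine HasDerivWithinAt.congr_deriv htot ?_
  unfold Pfun
  have hset : Finset.Icc (j+2) (K-1) = insert (j+2) (Finset.Icc (j+3) (K-1)) := by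
    ext x; simp only [Finset.mem_Icc, Finset.mem_insert]; omega
  rw [hset, Finset.sum_insert (by simp), show j+2-(j+1) = 1 by omega, hX'eq t ht]
  ring

lemma chainE {C : ℝ} (hC : 0 < C) {K : ℕ} (hK : 2 ≤ K) {X X' f f' : ℝ → ℝ}
    (hX : ContDiffOn ℝ (K : ℕ) X (Set.Icc 0 C)) (hX'c : Continuous X')
    (hX'eq : ∀ s ∈ Set.Icc (0:ℝ) C, X' s = X s) (hf'c : Continuous f')
    (hf'eq : ∀ s ∈ Set.Icc (0:ℝ) C, f' s = f s) (ω : ℕ → ℝ) :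
    ∀ j, j + 1 ≤ K - 1 →
    ((∀ t ∈ Set.Icc (0:ℝ) C,
        iteratedDerivWithin K X (Set.Icc 0 C) t
          + ∑ l ∈ Finset.Icc 1 (K-1), ω l * iteratedDerivWithin l X (Set.Icc 0 C) t = f t) ↔
      (∃ c : Fin (j+1) → ℝ, ∀ t ∈ Set.Icc (0:ℝ) C,
        Pfun C K ω X X' f' j t = ∑ i : Fin (j+1), c i * t ^ (i:ℕ))) := by
  intro j
  induction j with
  | zero =>
    intro _
    constructor
    · intro hode
      refine poly_up hC (fun t ht => dP0 hC hK hX hf'c ω ht) (Fin.elim0) fun t ht => ?_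
      rw [hf'eq t ht]
      simp [hode t ht]
    · intro ⟨c, hc⟩ t ht
      obtain ⟨c', hc'⟩ := poly_down hC (fun t ht => dP0 hC hK hX hf'c ω ht) c hc
      have := hc' t ht
      simp only [Finset.univ_eq_empty, Finset.sum_empty] at this
      rw [hf'eq t ht] at this
      linarith
  | succ j ih =>
    intro hj
    have hij := ih (by omega)
    have hstep : ∀ t ∈ Set.Icc (0:ℝ) C, HasDerivWithinAt (Pfun C K ω X X' f' (j+1))
        (Pfun C K ω X X' f' j t) (Set.Icc 0 C) t :=
      fun t ht => dPs hC hK hX hX'c hX'eq hf'c ω (by omega) ht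
    constructor
    · intro hode
      obtain ⟨c, hc⟩ := hij.mp hode
      exact poly_up hC hstep c hc
    · intro ⟨d, hd⟩
      exact hij.mpr (poly_down hC hstep d hd)

/-- Intermediate order-k (1 ≤ k ≤ K-1) integral reformulation of the general-order ODE;
the `l = k` term of the last sum is interpreted as `ω k * X t` since `G^0(t,s) = δ(t-s)`. -/
theorem stmt_7 (C : ℝ) (hC : 0 < C) (K k : ℕ) (hK : 2 ≤ K) (hk : 1 ≤ k) (hkK : k ≤ K - 1)
    (X f : ℝ → ℝ) (hX : ContDiffOn ℝ (K : ℕ) X (Set.Icc 0 C))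
    (hf : ContinuousOn f (Set.Icc 0 C)) (ω : ℕ → ℝ) :
    (∀ t ∈ Set.Icc (0 : ℝ) C,
      iteratedDerivWithin K X (Set.Icc 0 C) t +
        ∑ l ∈ Finset.Icc 1 (K - 1), ω l * iteratedDerivWithin l X (Set.Icc 0 C) t = f t) ↔
    (∃ c : Fin k → ℝ, ∀ t ∈ Set.Icc (0 : ℝ) C,
      iteratedDerivWithin (K - k) X (Set.Icc 0 C) t +
        (∑ l ∈ Finset.Icc (k + 1) (K - 1), ω l * iteratedDerivWithin (l - k) X (Set.Icc 0 C) t) +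
        (∑ l ∈ Finset.Icc 1 (k - 1), ω l * ∫ s in (0 : ℝ)..C, greenK (k - l) t s * X s) +
        ω k * X t =
        (∑ i : Fin k, c i * t ^ (i : ℕ)) + ∫ s in (0 : ℝ)..C, greenK k t s * f s) := by
  obtain ⟨k', rfl⟩ : ∃ k', k = k' + 1 := ⟨k - 1, by omega⟩
  set S := Set.Icc (0:ℝ) C with hS
  set X' : ℝ → ℝ := Set.IccExtend hC.le (S.restrict X) with hX'
  set f' : ℝ → ℝ := Set.IccExtend hC.le (S.restrict f) with hf'
  have hX'c : Continuous X' := hX.continuousOn.restrict.Icc_extend'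
  have hf'c : Continuous f' := hf.restrict.Icc_extend'
  have hX'eq : ∀ s ∈ S, X' s = X s := fun s hs => Set.IccExtend_of_mem hC.le _ hs
  have hf'eq : ∀ s ∈ S, f' s = f s := fun s hs => Set.IccExtend_of_mem hC.le _ hs
  have hE := chainE hC hK hX hX'c hX'eq hf'c hf'eq ω k' (by omega)
  rw [hE]
  -- now show the two existential statements agree
  have key : ∀ t ∈ S, Pfun C K ω X X' f' k' t =
      (iteratedDerivWithin (K - (k'+1)) X S t +
        (∑ l ∈ Finset.Icc (k' + 1 + 1) (K - 1), ω l * iteratedDerivWithin (l - (k'+1)) X S t) +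
        (∑ l ∈ Finset.Icc 1 (k' + 1 - 1), ω l * ∫ s in (0 : ℝ)..C, greenK (k'+1 - l) t s * X s) +
        ω (k'+1) * X t) - ∫ s in (0 : ℝ)..C, greenK (k'+1) t s * f s := by
    intro t ht
    have hg1 : ∀ l ∈ Finset.Icc 1 (k' + 1 - 1),
        ω l * (∫ s in (0:ℝ)..C, greenK (k'+1-l) t s * X s) = ω l * Jf (k'-l) X' t := by
      intro l hl
      rw [Finset.mem_Icc] at hl
      have h := green_int (C := C) (k'+1-l) (by omega) hX'c
        (fun s hs => (hX'eq s hs).symm) ht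
      rw [show k'+1-l-1 = k'-l by omega] at h
      rw [h]
    have hg2 : (∫ s in (0:ℝ)..C, greenK (k'+1) t s * f s) = Jf k' f' t := by
      have := green_int (C := C) (k'+1) (by omega) hf'c
        (fun s hs => (hf'eq s hs).symm) ht
      rwa [show k'+1-1 = k' by omega] at this
    rw [Finset.sum_congr rfl hg1, hg2]
    unfold Pfun
    rw [show k'+1+1 = k'+2 by omega, show k'+1-1 = k' by omega]
  constructor
  · intro ⟨c, hc⟩
    refine ⟨c, fun t ht => ?_⟩
    have := hc t ht
    rw [key t ht] at this
    linarith
  · intro ⟨c, hc⟩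
    refine ⟨c, fun t ht => ?_⟩
    rw [key t ht, hc t ht]
    ring
end
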